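/- arXiv:2404.05672 — 2 statements merged into one kernel-verified Lean document; each statement's English description precedes it below -/
import Mathlib

section
/- Let W be the bivariate formal power series over ℚ in variables x and y whose coefficient of x^n y^k (for n ≥ 1, k ≥ 0) is the number of Catalan words of length n with exactly k runs of weak ascents, and whose coefficient of x^0 y^k is 0 for all k. Then W satisfies the functional equation W = x·y + 2·x·W + x·W². -/
/-- The set of Catalan words of length `n`: words `w` over ℕ with `w 1 = 0` and
`w (i+1) ≤ w i + 1` for all `i`. -/
def CatalanWord (n : ℕ) : Set (List ℕ) :=
  {w | w.length = n ∧ w.getD 0 0 = 0 ∧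
    ∀ i, i + 1 < n → w.getD (i + 1) 0 ≤ w.getD i 0 + 1}

/-- Number of runs of weak ascents of `w`: `1 + #{i : w i > w (i+1)}`. -/
def wAscRuns (w : List ℕ) : ℕ :=
  1 + ((Finset.range (w.length - 1)).filter
    (fun i => w.getD (i + 1) 0 < w.getD i 0)).card

/-! Every nonempty Catalan word factors uniquely as `0 (u + 1) v` with `u`, `v` Catalan words,
possibly empty (`v` starts at the second `0`). Give the empty word no runs. The junction
`u + 1 | v` is a strict descent and the leading `0` only extends the first run, so the runs of
`0 (u + 1) v` are those of `u` together with those of `v`, the single exception being the word `0`.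
Hence `G = 1 + W` satisfies `G = 1 + x (G² - 1) + x y`, which is the claimed equation for `W`. -/

open Finset

theorem Finsupp.eq_single_zero_add_single_one (d : Fin 2 →₀ ℕ) :
    d = Finsupp.single 0 (d 0) + Finsupp.single 1 (d 1) := by
  ext i
  fin_cases i <;> simp

theorem MvPowerSeries.coeff_X_mul_of_apply_eq_zero {σ R : Type*} [Semiring R] {s : σ}
    {d : σ →₀ ℕ} (hd : d s = 0) (φ : MvPowerSeries σ R) : coeff d (X s * φ) = 0 := by
  rw [X_def, coeff_monomial_mul, if_neg]
  intro h
  simpa [hd] using h s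

section AscRuns

variable {α β : Type*} [LinearOrder α] [LinearOrder β]

/-- Runs of weak ascents, with `ascRuns [] = 0` whereas `wAscRuns [] = 1`. -/
def ascRuns : List α → ℕ
  | [] => 0
  | [_] => 1
  | a :: b :: l => ascRuns (b :: l) + if b < a then 1 else 0

theorem ascRuns_cons_of_le_head {a : α} {l : List α} (hl : l ≠ []) (h : a ≤ l.head hl) :
    ascRuns (a :: l) = ascRuns l := by
  obtain ⟨b, l, rfl⟩ := List.exists_cons_of_ne_nil hl
  simp [ascRuns, show a ≤ b from h]

theorem ascRuns_append {l₁ l₂ : List α}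
    (h : ∀ a ∈ l₁.getLast?, ∀ b ∈ l₂.head?, b < a) :
    ascRuns (l₁ ++ l₂) = ascRuns l₁ + ascRuns l₂ := by
  match l₁, l₂ with
  | [], _ => simp [ascRuns]
  | _, [] => simp [ascRuns]
  | [a], b :: l => simp_all [ascRuns, add_comm]
  | a :: a' :: l₁, l₂ =>
    have ih := ascRuns_append (l₁ := a' :: l₁) (l₂ := l₂) (by simpa using h)
    simp only [List.cons_append, ascRuns] at ih ⊢
    rw [ih]
    ring

theorem ascRuns_map {f : α → β} (hf : StrictMono f) (l : List α) :
    ascRuns (l.map f) = ascRuns l := by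
  match l with
  | [] | [_] => rfl
  | a :: b :: l => simp [ascRuns, hf.lt_iff_lt, ← ascRuns_map hf (b :: l)]

end AscRuns

theorem wAscRuns_eq_ascRuns {w : List ℕ} (hw : w ≠ []) : wAscRuns w = ascRuns w := by
  match w with
  | [_] => rfl
  | a :: b :: l =>
    rw [ascRuns, ← wAscRuns_eq_ascRuns (List.cons_ne_nil b l), wAscRuns, wAscRuns,
      card_filter, card_filter]
    simp only [List.length_cons, Nat.add_sub_cancel, Finset.sum_range_succ', List.getD_cons_succ,
      List.getD_cons_zero]
    ring

def IsCatalan (w : List ℕ) : Prop :=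
  w.IsChain (fun a b => b ≤ a + 1) ∧ w.headD 0 = 0

theorem mem_catalanWord_iff {w : List ℕ} {n : ℕ} :
    w ∈ CatalanWord n ↔ w.length = n ∧ IsCatalan w := by
  simp only [CatalanWord, Set.mem_ofPred_eq, IsCatalan, List.isChain_iff_getElem]
  constructor
  · rintro ⟨rfl, h0, hstep⟩
    refine ⟨rfl, fun i hi => ?_, by cases w <;> simp_all⟩
    simpa [List.getElem?_eq_getElem (Nat.lt_of_succ_lt hi), hi] using hstep i hi
  · rintro ⟨rfl, hstep, h0⟩
    refine ⟨rfl, by cases w <;> simp_all, fun i hi => ?_⟩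
    simpa [List.getElem?_eq_getElem (Nat.lt_of_succ_lt hi), hi] using hstep i hi

theorem List.IsChain.lt_headD_add_length {w : List ℕ} (hw : w.IsChain (fun a b => b ≤ a + 1)) :
    ∀ x ∈ w, x < w.headD 0 + w.length := by
  induction w with
  | nil => simp
  | cons a t ih =>
    have hhead : t.headD 0 ≤ a + 1 := by
      cases t <;> simp_all
    simp only [List.mem_cons, List.headD_cons, List.length_cons]
    rintro x (rfl | hx)
    · omega
    · have := ih (List.isChain_cons.1 hw).2 x hx
      omega

theorem finite_setOf_isCatalan_length (n : ℕ) : {w | IsCatalan w ∧ w.length = n}.Finite := by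
  refine ((List.finite_length_eq (Fin n) n).image (List.map Fin.val)).subset ?_
  rintro w ⟨hw, hn⟩
  have hlt := hw.1.lt_headD_add_length
  rw [hw.2, zero_add, hn] at hlt
  lift w to List (Fin n) using hlt
  exact ⟨w, by simpa using hn, rfl⟩

noncomputable def exponent (w : List ℕ) : Fin 2 →₀ ℕ :=
  Finsupp.single 0 w.length + Finsupp.single 1 (ascRuns w)

theorem exponent_eq_iff {w : List ℕ} {d : Fin 2 →₀ ℕ} :
    exponent w = d ↔ w.length = d 0 ∧ ascRuns w = d 1 := by
  constructor
  · rintro rfl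
    simp [exponent]
  · rintro ⟨h0, h1⟩
    rw [d.eq_single_zero_add_single_one, exponent, h0, h1]

noncomputable def catalanWordsOfExponent (d : Fin 2 →₀ ℕ) : Finset (List ℕ) :=
  (finite_setOf_isCatalan_length (d 0)).toFinset.filter (exponent · = d)

theorem mem_catalanWordsOfExponent {w : List ℕ} {d : Fin 2 →₀ ℕ} :
    w ∈ catalanWordsOfExponent d ↔ IsCatalan w ∧ exponent w = d := by
  rw [catalanWordsOfExponent, mem_filter, Set.Finite.mem_toFinset, exponent_eq_iff]
  exact ⟨fun ⟨⟨hc, _⟩, h⟩ => ⟨hc, h⟩, fun ⟨hc, h⟩ => ⟨⟨hc, h.1⟩, h⟩⟩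

theorem setOf_catalanWord_wAscRuns_eq {n : ℕ} (hn : n ≠ 0) (k : ℕ) :
    {w | w ∈ CatalanWord n ∧ wAscRuns w = k} =
      catalanWordsOfExponent (Finsupp.single 0 n + Finsupp.single 1 k) := by
  ext w
  rw [Set.mem_ofPred_eq, mem_coe, mem_catalanWordsOfExponent, exponent_eq_iff, mem_catalanWord_iff]
  simp only [Finsupp.add_apply, Finsupp.single_eq_same, Finsupp.single_eq_of_ne zero_ne_one,
    Finsupp.single_eq_of_ne one_ne_zero, add_zero, zero_add]
  constructor
  · rintro ⟨⟨rfl, hw⟩, rfl⟩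
    exact ⟨hw, rfl,
      (wAscRuns_eq_ascRuns (List.ne_nil_of_length_pos (Nat.pos_of_ne_zero hn))).symm⟩
  · rintro ⟨hw, rfl, rfl⟩
    exact ⟨⟨rfl, hw⟩,
      wAscRuns_eq_ascRuns (List.ne_nil_of_length_pos (Nat.pos_of_ne_zero hn))⟩

/-- The first-return decomposition `w = 0 (u + 1) v`; `catalanSplit` cuts `w` before its
second `0`. -/
def catalanJoin (p : List ℕ × List ℕ) : List ℕ := 0 :: (p.1.map (· + 1) ++ p.2)

def catalanSplit (w : List ℕ) : List ℕ × List ℕ :=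
  ((w.tail.takeWhile (· != 0)).map (· - 1), w.tail.dropWhile (· != 0))

theorem headD_dropWhile_ne_zero (l : List ℕ) : (l.dropWhile (· != 0)).headD 0 = 0 := by
  induction l with
  | nil => rfl
  | cons a l ih =>
    rcases eq_or_ne a 0 with rfl | ha
    · simp
    · simpa [ha] using ih

theorem catalanJoin_catalanSplit {w : List ℕ} (hw : w ≠ []) (h0 : w.headD 0 = 0) :
    catalanJoin (catalanSplit w) = w := by
  obtain ⟨a, s, rfl⟩ := List.exists_cons_of_ne_nil hw
  obtain rfl : a = 0 := h0
  have hpos : ∀ x ∈ s.takeWhile (· != 0), ((· + 1) ∘ (· - 1)) x = id x := fun x hx => by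
    have := List.mem_takeWhile_imp hx
    simp only [bne_iff_ne] at this
    simp only [Function.comp_apply, id_eq]
    omega
  rw [catalanJoin, catalanSplit, List.tail_cons, List.map_map, List.map_congr_left hpos,
    List.map_id, List.takeWhile_append_dropWhile]

theorem catalanSplit_catalanJoin {p : List ℕ × List ℕ} (hp : p.2.headD 0 = 0) :
    catalanSplit (catalanJoin p) = p := by
  have hpos : ∀ x ∈ p.1.map (· + 1), (x != 0) = true := by simp
  obtain ⟨u, v⟩ := p
  simp only [catalanSplit, catalanJoin, List.tail_cons, List.takeWhile_append_of_pos hpos,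
    List.dropWhile_append_of_pos hpos]
  rcases v with _ | ⟨b, t⟩
  · simp [List.map_map, Function.comp_def]
  · obtain rfl : b = 0 := hp
    simp [List.map_map, Function.comp_def]

theorem isCatalan_catalanJoin_iff {p : List ℕ × List ℕ} (hp : p.2.headD 0 = 0) :
    IsCatalan (catalanJoin p) ↔ IsCatalan p.1 ∧ IsCatalan p.2 := by
  obtain ⟨u, v⟩ := p
  have hv : ∀ x ∈ v.head?, x = 0 := by cases v <;> simp_all
  simp only [IsCatalan, catalanJoin, List.isChain_cons, List.isChain_append, List.isChain_map, hp]
  have hjoin : ∀ x ∈ (u.map (· + 1)).getLast?, ∀ y ∈ v.head?, y ≤ x + 1 :=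
    fun x _ y hy => (hv y hy).symm ▸ Nat.zero_le _
  have hhead : (∀ y ∈ (u.map (· + 1) ++ v).head?, y ≤ 0 + 1) ↔ u.headD 0 = 0 := by
    rcases u with _ | ⟨a, u⟩
    · rcases v with _ | ⟨b, t⟩ <;> simp_all
    · simp
  simp only [add_le_add_iff_right, List.headD_cons, and_true, hhead]
  tauto

theorem exponent_catalanJoin {p : List ℕ × List ℕ} (hp : p.2.headD 0 = 0)
    (hne : p ≠ ([], [])) :
    exponent (catalanJoin p) = Finsupp.single 0 1 + (exponent p.1 + exponent p.2) := by
  obtain ⟨u, v⟩ := p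
  have hne' : u.map (· + 1) ++ v ≠ [] := by simpa [Prod.ext_iff] using hne
  have hdesc : ∀ x ∈ (u.map (· + 1)).getLast?, ∀ y ∈ v.head?, y < x := by
    cases v <;> simp_all
  have hruns : ascRuns (catalanJoin (u, v)) = ascRuns u + ascRuns v := by
    rw [catalanJoin, ascRuns_cons_of_le_head hne' (Nat.zero_le _), ascRuns_append hdesc,
      ascRuns_map (fun _ _ h => Nat.succ_lt_succ h)]
  rw [exponent, hruns]
  simp only [exponent, catalanJoin, List.length_cons, List.length_append, List.length_map,
    Finsupp.single_add]
  abel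

theorem catalanWordsOfExponent_of_apply_zero_eq_zero {d : Fin 2 →₀ ℕ} (hd : d 0 = 0) :
    catalanWordsOfExponent d = if d = 0 then {[]} else ∅ := by
  ext w
  rw [mem_catalanWordsOfExponent, exponent_eq_iff, hd, List.length_eq_zero_iff]
  split_ifs with h
  · subst h
    rw [mem_singleton]
    exact ⟨fun h => h.2.1, by rintro rfl; simp [IsCatalan, ascRuns]⟩
  · simp only [notMem_empty, iff_false]
    rintro ⟨-, rfl, h1⟩
    exact h (by rw [d.eq_single_zero_add_single_one, hd, ← h1]; simp [ascRuns])

theorem isCatalan_and_length_eq_one_iff {w : List ℕ} :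
    IsCatalan w ∧ w.length = 1 ↔ w = [0] := by
  constructor
  · rintro ⟨⟨-, h0⟩, h1⟩
    obtain ⟨a, rfl⟩ := List.length_eq_one_iff.1 h1
    simpa using h0
  · rintro rfl
    simp [IsCatalan]

theorem catalanWordsOfExponent_single_zero_one_add_single_one (k : ℕ) :
    catalanWordsOfExponent (Finsupp.single 0 1 + Finsupp.single 1 k) =
      if k = 1 then {[0]} else ∅ := by
  ext w
  simp only [mem_catalanWordsOfExponent, exponent_eq_iff, Finsupp.add_apply, Finsupp.single_eq_same,
    Finsupp.single_eq_of_ne zero_ne_one, Finsupp.single_eq_of_ne one_ne_zero, add_zero, zero_add,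
    ← and_assoc, isCatalan_and_length_eq_one_iff]
  rcases eq_or_ne w [0] with rfl | hw
  · split_ifs <;> simp [ascRuns, eq_comm, *]
  · split_ifs <;> simp [hw]

theorem catalanWordsOfExponent_single_zero_one_add {d : Fin 2 →₀ ℕ} (hd : d 0 ≠ 0) :
    catalanWordsOfExponent (Finsupp.single 0 1 + d) =
      ((antidiagonal d).sigma fun p =>
        catalanWordsOfExponent p.1 ×ˢ catalanWordsOfExponent p.2).image
        fun x => catalanJoin x.2 := by
  ext w
  simp only [mem_image, mem_sigma, mem_product, HasAntidiagonal.mem_antidiagonal,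
    mem_catalanWordsOfExponent, Sigma.exists, Prod.exists]
  constructor
  · rintro ⟨hw, hexp⟩
    have hne : w ≠ [] := by
      rintro rfl
      have := congr($hexp 0)
      simp [exponent] at this
      omega
    set p := catalanSplit w
    have hjoin : catalanJoin p = w := catalanJoin_catalanSplit hne hw.2
    have hv : p.2.headD 0 = 0 := headD_dropWhile_ne_zero _
    have hp : p ≠ ([], []) := by
      intro hp
      apply hd
      simpa [← hjoin, hp, catalanJoin, exponent, ascRuns] using congr($hexp 0)
    rw [← hjoin, isCatalan_catalanJoin_iff hv] at hw
    rw [← hjoin, exponent_catalanJoin hv hp] at hexp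
    exact ⟨_, _, p.1, p.2, ⟨add_left_cancel hexp, ⟨hw.1, rfl⟩, hw.2, rfl⟩, hjoin⟩
  · rintro ⟨_, _, u, v, ⟨hexp, ⟨hu, rfl⟩, hv, rfl⟩, rfl⟩
    have hp : (u, v) ≠ ([], []) := by
      intro hp
      simp only [Prod.mk.injEq] at hp
      obtain ⟨rfl, rfl⟩ := hp
      exact hd (by simpa [exponent, ascRuns] using congr($hexp.symm 0))
    exact ⟨(isCatalan_catalanJoin_iff hv.2).2 ⟨hu, hv⟩,
      by rw [exponent_catalanJoin hv.2 hp, hexp]⟩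

theorem card_catalanWordsOfExponent_single_zero_one_add {d : Fin 2 →₀ ℕ} (hd : d 0 ≠ 0) :
    #(catalanWordsOfExponent (Finsupp.single 0 1 + d)) =
      ∑ p ∈ antidiagonal d, #(catalanWordsOfExponent p.1) * #(catalanWordsOfExponent p.2) := by
  rw [catalanWordsOfExponent_single_zero_one_add hd, card_image_of_injOn, card_sigma]
  · simp only [card_product]
  rintro ⟨p, u⟩ hx ⟨q, v⟩ hy (huv : catalanJoin u = catalanJoin v)
  simp only [coe_sigma, Set.mem_sigma_iff, mem_coe, mem_product,
    mem_catalanWordsOfExponent] at hx hy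
  obtain rfl : u = v := by
    rw [← catalanSplit_catalanJoin hx.2.2.1.2, huv, catalanSplit_catalanJoin hy.2.2.1.2]
  obtain rfl : p = q := Prod.ext (hx.2.1.2.symm.trans hy.2.1.2) (hx.2.2.2.symm.trans hy.2.2.2)
  rfl

open MvPowerSeries

noncomputable def catalanGF : MvPowerSeries (Fin 2) ℚ := fun d => #(catalanWordsOfExponent d)

theorem coeff_catalanGF (d : Fin 2 →₀ ℕ) :
    coeff d catalanGF = #(catalanWordsOfExponent d) := rfl

theorem coeff_catalanGF_sq_of_apply_zero_eq_zero {d : Fin 2 →₀ ℕ} (hd : d 0 = 0) :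
    coeff d (catalanGF ^ 2) = if d = 0 then 1 else 0 := by
  have hterm : ∀ p ∈ antidiagonal d,
      coeff p.1 catalanGF * coeff p.2 catalanGF = if p = (0, 0) then 1 else 0 := by
    intro p hp
    have hp0 := congr($(HasAntidiagonal.mem_antidiagonal.1 hp) 0)
    rw [Finsupp.add_apply, hd, Nat.add_eq_zero_iff] at hp0
    simp only [coeff_catalanGF, catalanWordsOfExponent_of_apply_zero_eq_zero hp0.1,
      catalanWordsOfExponent_of_apply_zero_eq_zero hp0.2, Prod.ext_iff]
    split_ifs <;> simp_all
  rw [sq, coeff_mul, sum_congr rfl hterm, sum_ite_eq']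
  simp [eq_comm]

theorem coeff_single_zero_one_add_catalanGF (d : Fin 2 →₀ ℕ) :
    coeff (Finsupp.single 0 1 + d) catalanGF = coeff d (X 1 - 1 + catalanGF ^ 2) := by
  rw [map_add, map_sub, coeff_X, coeff_one, coeff_catalanGF]
  by_cases hd : d 0 = 0
  · rw [coeff_catalanGF_sq_of_apply_zero_eq_zero hd]
    obtain ⟨k, rfl⟩ : ∃ k, d = Finsupp.single 1 k :=
      ⟨d 1, by ext i; fin_cases i <;> simp [hd]⟩
    rw [catalanWordsOfExponent_single_zero_one_add_single_one]
    simp only [(Finsupp.single_injective _).eq_iff, Finsupp.single_eq_zero]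
    split_ifs <;> simp_all
  · have h0 : d ≠ 0 := fun h => hd (by simp [h])
    have h1 : d ≠ Finsupp.single 1 1 := fun h => hd (by simp [h])
    rw [card_catalanWordsOfExponent_single_zero_one_add hd, sq, coeff_mul, if_neg h1, if_neg h0]
    simp [coeff_catalanGF]

theorem catalanGF_eq : catalanGF = 1 + X 0 * (X 1 - 1 + catalanGF ^ 2) := by
  ext d
  by_cases hd : d 0 = 0
  · rw [map_add, coeff_X_mul_of_apply_eq_zero hd, add_zero, coeff_one, coeff_catalanGF,
      catalanWordsOfExponent_of_apply_zero_eq_zero hd]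
    split_ifs <;> simp
  · obtain ⟨d, rfl⟩ : ∃ d', d = Finsupp.single 0 1 + d' :=
      exists_add_of_le (Finsupp.single_le_iff.2 (Nat.one_le_iff_ne_zero.2 hd))
    rw [map_add, coeff_one, if_neg (by simp), zero_add, X_def, coeff_add_monomial_mul,
      one_mul, coeff_single_zero_one_add_catalanGF]

/-- The bivariate generating function `W(x,y)` of nonempty Catalan words by length and
number of runs of weak ascents satisfies `W = xy + 2xW + xW²`. -/
theorem wAscRuns_gf_equation (F : MvPowerSeries (Fin 2) ℚ)
    (h0 : ∀ k : ℕ, MvPowerSeries.coeff (Finsupp.single 1 k) F = 0)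
    (h : ∀ n k : ℕ, 1 ≤ n →
      MvPowerSeries.coeff (Finsupp.single 0 n + Finsupp.single 1 k) F =
        Nat.card {w : List ℕ | w ∈ CatalanWord n ∧ wAscRuns w = k}) :
    F = MvPowerSeries.X 0 * MvPowerSeries.X 1
      + 2 * MvPowerSeries.X 0 * F
      + MvPowerSeries.X 0 * F ^ 2 := by
  have hF : F = catalanGF - 1 := by
    ext d
    obtain ⟨n, k, rfl⟩ : ∃ n k, d = Finsupp.single 0 n + Finsupp.single 1 k :=
      ⟨d 0, d 1, d.eq_single_zero_add_single_one⟩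
    rw [map_sub, coeff_catalanGF, coeff_one]
    rcases eq_or_ne n 0 with rfl | hn
    · rw [Finsupp.single_zero, zero_add, h0,
        catalanWordsOfExponent_of_apply_zero_eq_zero (by simp)]
      split_ifs <;> simp
    · rw [h n k (Nat.one_le_iff_ne_zero.2 hn), setOf_catalanWord_wAscRuns_eq hn,
        Nat.card_coe_set_eq, Set.ncard_coe_finset,
        if_neg (fun h => hn (by simpa using congr($h 0)))]
      simp
  rw [hF]
  linear_combination catalanGF_eq
end

section
/- For all integers n ≥ 1 and k ≥ 1, the number of Catalan words of length n with exactly k runs of weak ascents equals the number of Dyck paths of semilength n having exactly k-1 occurrences of two consecutive up-steps UU whose midpoint lies at even height (the height after the first of the two up-steps is even). -/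
/-- Dyck paths of semilength `n`, encoded as lists of booleans
(`true` = up step `U`, `false` = down step `D`): `2n` steps, `n` of them up,
and every prefix has at least as many up steps as down steps. -/
def DyckPath (n : ℕ) : Set (List Bool) :=
  {p | p.length = 2 * n ∧ p.count true = n ∧
    ∀ i, i ≤ 2 * n → (p.take i).count false ≤ (p.take i).count true}

/-- Number of occurrences of `UU` whose midpoint lies at even height:
indices `i` such that steps `i` and `i+1` are both up steps and the height
after step `i` is even. -/
def uuEvenMid (p : List Bool) : ℕ :=
  ((Finset.range p.length).filter (fun i =>
    i + 1 < p.length ∧ p.getD i false = true ∧ p.getD (i + 1) false = true ∧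
    Even ((p.take (i + 1)).count true - (p.take (i + 1)).count false))).card

/-!
Both sides are coefficients of generating polynomials in `X` that obey the same transfer
recursion.

Cut a Dyck path of semilength `m + 1` into `U`, then `m` pairs of steps, then `D`. The height
after step `i` has the parity of `i`, so the `UU`s with midpoint at even height are exactly the
pairs equal to `UU`, and the heights between pairs are odd, `2 s + 1`. The pairs form a walk on
`s ≥ 0` with steps `+1` (`UU`, weight `X`), `0` (`UD` or `DU`) and `-1` (`DD`); on the series
`∑ F s * y ^ s` of endpoints one pair multiplies by `X * y + 2 + y⁻¹` and drops the `y⁻¹` term.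

For Catalan words, mark descents by `X` and the last letter by `z`. Appending a letter to a word
ending in `l` turns `z ^ l` into `X * (1 + z + ⋯ + z ^ (l - 1)) + z ^ l + z ^ (l + 1)`. Since
`X * y * (1 + z + ⋯ + z ^ (l - 1)) = z ^ l - 1` at `z = 1 + X * y`, this is the same operator in
`y`, so the two series agree for every `m`, and `y = 0` gives the theorem.
-/

open Finset Polynomial

section ExtendBy

variable {α : Type*} [DecidableEq α]

def extendBy (S : Finset (List α)) (next : List α → Finset α) : Finset (List α) :=
  S.biUnion fun w => (next w).image fun x => w ++ [x]

@[simp]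
lemma mem_extendBy {S : Finset (List α)} {next : List α → Finset α} {v : List α} :
    v ∈ extendBy S next ↔ ∃ w ∈ S, ∃ x ∈ next w, w ++ [x] = v := by
  simp [extendBy]

lemma sum_extendBy {M : Type*} [AddCommMonoid M] {S : Finset (List α)} {L : ℕ}
    (hS : ∀ w ∈ S, w.length = L) (next : List α → Finset α) (f : List α → M) :
    ∑ v ∈ extendBy S next, f v = ∑ w ∈ S, ∑ x ∈ next w, f (w ++ [x]) := by
  rw [extendBy, sum_biUnion]
  · exact sum_congr rfl fun w _ => sum_image fun x _ y _ h => by simpa using h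
  · intro w hw w' hw' hne
    simp only [Function.onFun, disjoint_left, mem_image]
    rintro _ ⟨x, -, rfl⟩ ⟨y, -, h⟩
    exact hne (List.append_inj h (by rw [hS w' hw', hS w hw])).1.symm

end ExtendBy

lemma card_filter_eq_coeff_sum_X_pow {ι : Type*} (S : Finset ι) (f : ι → ℕ) (k : ℕ) :
    (S.filter fun i => f i = k).card = (∑ i ∈ S, (X : ℕ[X]) ^ f i).coeff k := by
  rw [card_filter, finsetSum_coeff]
  simp [coeff_X_pow, eq_comm]

/-- Multiplication of the series `∑ F s * y ^ s` by `X * y + 2 + y⁻¹`, dropping the `y⁻¹` term. -/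
noncomputable def motzkinStep (F : ℕ → ℕ[X]) : ℕ → ℕ[X]
  | 0 => 2 * F 0 + F 1
  | s + 1 => X * F s + 2 * F (s + 1) + F (s + 2)

lemma motzkinStep_sum {ι : Type*} (S : Finset ι) (c : ι → ℕ[X]) (F : ι → ℕ → ℕ[X]) :
    motzkinStep (fun s => ∑ i ∈ S, c i * F i s) =
      fun s => ∑ i ∈ S, c i * motzkinStep (F i) s := by
  funext s
  cases s <;> simp only [motzkinStep, mul_sum, sum_add_distrib, mul_add, mul_left_comm]

/-- The coefficients of `(1 + X * y) ^ l`. -/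
noncomputable def binomialProfile (l s : ℕ) : ℕ[X] := (l.choose s : ℕ[X]) * X ^ s

lemma sum_range_choose_eq_choose_succ (l s : ℕ) :
    ∑ x ∈ range l, x.choose s = l.choose (s + 1) := by
  induction l with
  | zero => simp
  | succ l ih => rw [sum_range_succ, ih, Nat.choose_succ_succ', add_comm]

lemma motzkinStep_binomialProfile (l : ℕ) :
    motzkinStep (binomialProfile l) =
      fun s => ∑ x ∈ range (l + 2), X ^ (if x < l then 1 else 0) * binomialProfile x s := by
  funext s
  have hbelow : ∑ x ∈ range l, X ^ (if x < l then 1 else 0) * binomialProfile x s =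
      binomialProfile l (s + 1) := by
    rw [sum_congr rfl fun x hx => by rw [if_pos (mem_range.mp hx), pow_one]]
    simp only [binomialProfile, ← mul_sum, ← sum_mul, ← Nat.cast_sum,
      sum_range_choose_eq_choose_succ, pow_succ]
    ring
  rw [sum_range_succ, sum_range_succ, hbelow, if_neg (lt_irrefl l), if_neg (by omega), pow_zero,
    one_mul, one_mul]
  cases s with
  | zero =>
    simp only [motzkinStep, binomialProfile, zero_add, Nat.choose_zero_right, Nat.choose_one_right]
    ring
  | succ s =>
    simp only [motzkinStep, binomialProfile, Nat.choose_succ_succ', Nat.cast_add]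
    ring

def descents (w : List ℕ) : ℕ :=
  ((range (w.length - 1)).filter fun i => w.getD (i + 1) 0 < w.getD i 0).card

lemma wAscRuns_eq_one_add_descents (w : List ℕ) : wAscRuns w = 1 + descents w := rfl

lemma descents_append_singleton {w : List ℕ} (hw : w ≠ []) (x : ℕ) :
    descents (w ++ [x]) = descents w + if x < w.getLastD 0 then 1 else 0 := by
  obtain ⟨v, c, rfl⟩ := (List.eq_nil_or_concat w).resolve_left hw
  rw [List.concat_eq_append, List.getLastD_concat]
  simp only [descents, card_filter, List.length_append, List.length_singleton,
    Nat.add_sub_cancel, sum_range_succ]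
  congr 1
  · refine sum_congr rfl fun i hi => ?_
    have hi : i < v.length := mem_range.mp hi
    rw [List.getD_append (v ++ [c]) [x] _ _ (by simp; omega),
      List.getD_append (v ++ [c]) [x] _ _ (by simp; omega)]
  · simp

lemma append_mem_catalanWord_iff {w : List ℕ} {m : ℕ} (hw : w.length = m + 1) (x : ℕ) :
    w ++ [x] ∈ CatalanWord (m + 2) ↔ w ∈ CatalanWord (m + 1) ∧ x ≤ w.getLastD 0 + 1 := by
  have hleft : ∀ i < m + 1, (w ++ [x]).getD i 0 = w.getD i 0 := fun i hi =>
    List.getD_append _ _ _ _ (by omega)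
  have hright : (w ++ [x]).getD (m + 1) 0 = x := by
    simp [hw]
  have hlast : w.getLastD 0 = w.getD m 0 := by
    simp [List.getLast?_eq_getElem?, hw]
  simp only [CatalanWord, Set.mem_ofPred_eq, List.length_append, List.length_singleton, hw,
    hleft 0 (by omega), hlast, true_and]
  constructor
  · intro ⟨h0, hstep⟩
    refine ⟨⟨h0, fun i hi => ?_⟩, ?_⟩
    · have h := hstep i (by omega)
      rwa [hleft i (by omega), hleft (i + 1) hi] at h
    · have h := hstep m (by omega)
      rwa [hright, hleft m (by omega)] at h
  · intro ⟨⟨h0, hstep⟩, hx⟩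
    refine ⟨h0, fun i hi => ?_⟩
    rcases Nat.lt_or_ge (i + 1) (m + 1) with hi' | hi'
    · rw [hleft i (by omega), hleft (i + 1) hi']
      exact hstep i hi'
    · rwa [show i = m by omega, hright, hleft m (by omega)]

def catalanWords : ℕ → Finset (List ℕ)
  | 0 => {[0]}
  | m + 1 => extendBy (catalanWords m) fun w => range (w.getLastD 0 + 2)

lemma mem_catalanWords {m : ℕ} {w : List ℕ} : w ∈ catalanWords m ↔ w ∈ CatalanWord (m + 1) := by
  induction m generalizing w with
  | zero =>
    rw [catalanWords, mem_singleton]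
    constructor
    · rintro rfl
      simp [CatalanWord]
    · rintro ⟨hl, h0, -⟩
      obtain ⟨a, rfl⟩ := List.length_eq_one_iff.1 hl
      simpa using h0
  | succ m ih =>
    simp only [catalanWords, mem_extendBy, ih, mem_range]
    constructor
    · rintro ⟨v, hv, x, hx, rfl⟩
      exact (append_mem_catalanWord_iff hv.1 x).2 ⟨hv, by omega⟩
    · intro hw
      have hne : w ≠ [] := by rintro rfl; simp [CatalanWord] at hw
      obtain ⟨v, x, rfl⟩ := (List.eq_nil_or_concat w).resolve_left hne
      rw [List.concat_eq_append] at hw ⊢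
      have hv : v.length = m + 1 := by simpa [CatalanWord] using hw.1
      obtain ⟨hvw, hx⟩ := (append_mem_catalanWord_iff hv x).1 hw
      exact ⟨v, hvw, x, by omega, rfl⟩

lemma length_of_mem_catalanWords {m : ℕ} {w : List ℕ} (hw : w ∈ catalanWords m) :
    w.length = m + 1 :=
  (mem_catalanWords.1 hw).1

noncomputable def catalanProfile (m s : ℕ) : ℕ[X] :=
  ∑ w ∈ catalanWords m, X ^ descents w * binomialProfile (w.getLastD 0) s

lemma catalanProfile_succ (m : ℕ) :
    catalanProfile (m + 1) = motzkinStep (catalanProfile m) := by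
  funext s
  have hne : ∀ w ∈ catalanWords m, w ≠ [] := fun w hw h => by
    simpa [h] using length_of_mem_catalanWords hw
  unfold catalanProfile
  rw [catalanWords, sum_extendBy (fun _ => length_of_mem_catalanWords), motzkinStep_sum]
  refine sum_congr rfl fun w hw => ?_
  simp only [descents_append_singleton (hne w hw), List.getLastD_concat, pow_add, mul_assoc,
    ← mul_sum, motzkinStep_binomialProfile]

lemma natCard_catalanWord_wAscRuns (m : ℕ) {k : ℕ} (hk : 1 ≤ k) :
    Nat.card {w : List ℕ | w ∈ CatalanWord (m + 1) ∧ wAscRuns w = k} =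
      (catalanProfile m 0).coeff (k - 1) := by
  have hset : {w : List ℕ | w ∈ CatalanWord (m + 1) ∧ wAscRuns w = k} =
      ↑((catalanWords m).filter (descents · = k - 1)) := by
    ext w
    simp only [Set.mem_ofPred_eq, coe_filter, mem_catalanWords, wAscRuns_eq_one_add_descents]
    exact and_congr_right fun _ => by omega
  rw [hset, Nat.card_coe_set_eq, Set.ncard_coe_finset, card_filter_eq_coeff_sum_X_pow]
  simp [catalanProfile, binomialProfile]

def height (p : List Bool) : ℕ := p.count true - p.count false

lemma count_append_singleton (p : List Bool) (a b : Bool) :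
    (p ++ [a]).count b = p.count b + if a = b then 1 else 0 := by
  simp [List.count_singleton]

lemma height_append_true {p : List Bool} (hp : p.count false ≤ p.count true) :
    height (p ++ [true]) = height p + 1 := by
  simp only [height, count_append_singleton, reduceIte, Bool.true_eq_false]
  omega

lemma height_append_false (p : List Bool) : height (p ++ [false]) = height p - 1 := by
  simp only [height, count_append_singleton, reduceIte, Bool.false_eq_true]
  omega

def IsDyckPrefix (p : List Bool) : Prop :=
  ∀ i, (p.take i).count false ≤ (p.take i).count true

lemma IsDyckPrefix.count_le {p : List Bool} (hp : IsDyckPrefix p) :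
    p.count false ≤ p.count true := by
  simpa using hp p.length

lemma IsDyckPrefix.height_add_two_mul_count_false {p : List Bool} (hp : IsDyckPrefix p) :
    height p + 2 * p.count false = p.length := by
  have := hp.count_le
  have := List.count_true_add_count_false p
  simp only [height]
  omega

lemma isDyckPrefix_append_singleton {p : List Bool} {a : Bool} :
    IsDyckPrefix (p ++ [a]) ↔ IsDyckPrefix p ∧ (a = true ∨ height p ≠ 0) := by
  have htake : ∀ i, i ≤ p.length → (p ++ [a]).take i = p.take i := fun i hi =>
    List.take_append_of_le_length hi
  have hwhole : ∀ i, p.length < i → (p ++ [a]).take i = p ++ [a] := fun i hi =>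
    List.take_of_length_le (by simp only [List.length_append, List.length_singleton]; omega)
  constructor
  · intro h
    refine ⟨fun i => ?_, ?_⟩
    · rcases Nat.le_total i p.length with hi | hi
      · simpa [htake i hi] using h i
      · simpa [List.take_of_length_le hi, htake _ le_rfl] using h p.length
    · have hlast := h (p.length + 1)
      rw [hwhole _ (by omega)] at hlast
      cases a
      · simp only [height, count_append_singleton, reduceIte, Bool.false_eq_true] at hlast ⊢
        omega
      · exact Or.inl rfl
  · rintro ⟨hp, ha⟩ i
    rcases le_or_gt i p.length with hi | hi
    · rw [htake i hi]
      exact hp i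
    · have := hp.count_le
      rw [hwhole i hi]
      cases a <;> simp only [height, count_append_singleton, reduceIte, Bool.true_eq_false,
        Bool.false_eq_true, true_or, false_or] at ha ⊢ <;> omega

def dyckSteps (p : List Bool) : Finset Bool :=
  univ.filter fun a => a = true ∨ height p ≠ 0

def dyckPrefixes : ℕ → Finset (List Bool)
  | 0 => {[]}
  | L + 1 => extendBy (dyckPrefixes L) dyckSteps

lemma mem_dyckPrefixes {L : ℕ} {p : List Bool} :
    p ∈ dyckPrefixes L ↔ p.length = L ∧ IsDyckPrefix p := by
  induction L generalizing p with
  | zero =>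
    rw [dyckPrefixes, mem_singleton, List.length_eq_zero_iff]
    exact ⟨fun h => ⟨h, fun i => by simp [h]⟩, And.left⟩
  | succ L ih =>
    simp only [dyckPrefixes, dyckSteps, mem_extendBy, ih, mem_filter, mem_univ, true_and]
    constructor
    · rintro ⟨q, ⟨hq, hqd⟩, a, ha, rfl⟩
      exact ⟨by simp [hq], isDyckPrefix_append_singleton.2 ⟨hqd, ha⟩⟩
    · rintro ⟨hl, hp⟩
      have hne : p ≠ [] := by rintro rfl; simp at hl
      obtain ⟨q, a, rfl⟩ := (List.eq_nil_or_concat p).resolve_left hne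
      rw [List.concat_eq_append] at hl hp ⊢
      obtain ⟨hq, ha⟩ := isDyckPrefix_append_singleton.1 hp
      exact ⟨q, ⟨by simpa using hl, hq⟩, a, ha, rfl⟩

lemma length_of_mem_dyckPrefixes {L : ℕ} {p : List Bool} (hp : p ∈ dyckPrefixes L) :
    p.length = L :=
  (mem_dyckPrefixes.1 hp).1

lemma odd_height_of_mem_dyckPrefixes {m : ℕ} {p : List Bool} (hp : p ∈ dyckPrefixes (2 * m + 1)) :
    Odd (height p) := by
  obtain ⟨hl, hd⟩ := mem_dyckPrefixes.1 hp
  have := hd.height_add_two_mul_count_false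
  exact ⟨m - p.count false, by omega⟩

lemma uuEvenMid_append_singleton (p : List Bool) (a : Bool) :
    uuEvenMid (p ++ [a]) =
      uuEvenMid p + if p.getLastD false = true ∧ a = true ∧ Even (height p) then 1 else 0 := by
  rcases List.eq_nil_or_concat p with rfl | ⟨v, c, rfl⟩
  · simp [uuEvenMid]
  rw [List.concat_eq_append, List.getLastD_concat]
  simp only [uuEvenMid, card_filter, List.length_append, List.length_singleton, sum_range_succ,
    lt_self_iff_false, false_and, if_false, add_zero]
  congr 1
  · refine sum_congr rfl fun i hi => ?_
    have hi : i < v.length := mem_range.mp hi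
    rw [List.getD_append (v ++ [c]) [a] _ _ (by simp; omega),
      List.getD_append (v ++ [c]) [a] _ _ (by simp; omega),
      List.take_append_of_le_length (by simp; omega)]
    simp only [show i + 1 < v.length + 1 + 1 by omega, show i + 1 < v.length + 1 by omega,
      true_and]
  · rw [List.take_append_of_le_length (by simp), List.take_of_length_le (by simp)]
    simp [height]

lemma uuEvenMid_append_pair {p : List Bool} (hp : p.count false ≤ p.count true)
    (hodd : Odd (height p)) (a b : Bool) :
    uuEvenMid (p ++ [a] ++ [b]) = uuEvenMid p + if a = true ∧ b = true then 1 else 0 := by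
  have hnot : ¬ Even (height p) := Nat.not_even_iff_odd.2 hodd
  rw [uuEvenMid_append_singleton, uuEvenMid_append_singleton, List.getLastD_concat]
  cases a
  · simp [hnot]
  · simp [hnot, height_append_true hp, Nat.even_add_one]

noncomputable def dyckProfile (m s : ℕ) : ℕ[X] :=
  ∑ p ∈ dyckPrefixes (2 * m + 1), X ^ uuEvenMid p * if height p = 2 * s + 1 then 1 else 0

lemma sum_dyckSteps_pair {p : List Bool} (hp : IsDyckPrefix p) (hodd : Odd (height p)) (s : ℕ) :
    ∑ a ∈ dyckSteps p, ∑ b ∈ dyckSteps (p ++ [a]),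
        X ^ uuEvenMid (p ++ [a] ++ [b]) * (if height (p ++ [a] ++ [b]) = 2 * s + 1 then 1 else 0) =
      X ^ uuEvenMid p * motzkinStep (fun t => if height p = 2 * t + 1 then 1 else 0) s := by
  obtain ⟨t, ht⟩ := hodd
  have hp1 : IsDyckPrefix (p ++ [true]) := isDyckPrefix_append_singleton.2 ⟨hp, Or.inl rfl⟩
  have hp0 : IsDyckPrefix (p ++ [false]) :=
    isDyckPrefix_append_singleton.2 ⟨hp, Or.inr (by omega)⟩
  have h1 : height (p ++ [true]) = 2 * t + 2 := by rw [height_append_true hp.count_le, ht]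
  have h0 : height (p ++ [false]) = 2 * t := by rw [height_append_false, ht]; rfl
  have h11 : height (p ++ [true] ++ [true]) = 2 * t + 3 := by
    rw [height_append_true hp1.count_le, h1]
  have h10 : height (p ++ [true] ++ [false]) = 2 * t + 1 := by rw [height_append_false, h1]; rfl
  have h01 : height (p ++ [false] ++ [true]) = 2 * t + 1 := by
    rw [height_append_true hp0.count_le, h0]
  have h00 : height (p ++ [false] ++ [false]) = 2 * t - 1 := by rw [height_append_false, h0]
  simp only [dyckSteps, sum_filter, Fintype.sum_bool, uuEvenMid_append_pair hp.count_le ⟨t, ht⟩,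
    h11, h10, h01, h00, h1, h0, ht]
  cases s <;> simp [motzkinStep] <;> split_ifs <;> first | omega | ring

lemma dyckProfile_succ (m : ℕ) : dyckProfile (m + 1) = motzkinStep (dyckProfile m) := by
  funext s
  unfold dyckProfile
  rw [show 2 * (m + 1) + 1 = 2 * m + 1 + 1 + 1 by ring, dyckPrefixes,
    sum_extendBy (fun _ => length_of_mem_dyckPrefixes), dyckPrefixes,
    sum_extendBy (fun _ => length_of_mem_dyckPrefixes), motzkinStep_sum]
  exact sum_congr rfl fun p hp => sum_dyckSteps_pair (mem_dyckPrefixes.1 hp).2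
    (odd_height_of_mem_dyckPrefixes hp) s

lemma mem_dyckPath_iff {n : ℕ} {p : List Bool} :
    p ∈ DyckPath n ↔ p ∈ dyckPrefixes (2 * n) ∧ height p = 0 := by
  have hsum := List.count_true_add_count_false p
  rw [mem_dyckPrefixes]
  constructor
  · rintro ⟨hl, hn, hd⟩
    have hprefix : IsDyckPrefix p := fun i => by
      rcases le_or_gt i (2 * n) with hi | hi
      · exact hd i hi
      · have h := hd (2 * n) le_rfl
        rw [List.take_of_length_le (show p.length ≤ 2 * n by omega)] at h
        rwa [List.take_of_length_le (show p.length ≤ i by omega)]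
    exact ⟨⟨hl, hprefix⟩, by simp only [height]; omega⟩
  · rintro ⟨⟨hl, hd⟩, h0⟩
    have := hd.count_le
    exact ⟨hl, by simp only [height] at h0; omega, fun i _ => hd i⟩

lemma sum_dyckPrefixes_height_eq_zero (m : ℕ) :
    ∑ p ∈ (dyckPrefixes (2 * m + 2)).filter (height · = 0), X ^ uuEvenMid p = dyckProfile m 0 := by
  rw [sum_filter, dyckPrefixes, sum_extendBy (fun _ => length_of_mem_dyckPrefixes)]
  refine sum_congr rfl fun p hp => ?_
  obtain ⟨t, ht⟩ := odd_height_of_mem_dyckPrefixes hp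
  have h1 : height (p ++ [true]) = 2 * t + 2 := by
    rw [height_append_true (mem_dyckPrefixes.1 hp).2.count_le, ht]
  simp [dyckSteps, h1, height_append_false, ht, uuEvenMid_append_singleton]

lemma natCard_dyckPath_uuEvenMid (m c : ℕ) :
    Nat.card {p : List Bool | p ∈ DyckPath (m + 1) ∧ uuEvenMid p = c} =
      (dyckProfile m 0).coeff c := by
  have hset : {p : List Bool | p ∈ DyckPath (m + 1) ∧ uuEvenMid p = c} =
      ↑(((dyckPrefixes (2 * m + 2)).filter (height · = 0)).filter (uuEvenMid · = c)) := by
    ext p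
    simp [mem_dyckPath_iff, and_assoc, show 2 * (m + 1) = 2 * m + 2 by ring]
  rw [hset, Nat.card_coe_set_eq, Set.ncard_coe_finset, card_filter_eq_coeff_sum_X_pow,
    sum_dyckPrefixes_height_eq_zero]

lemma catalanProfile_eq_dyckProfile (m : ℕ) : catalanProfile m = dyckProfile m := by
  induction m with
  | zero =>
    have hdyck : dyckPrefixes (2 * 0 + 1) = {[true]} := by decide
    funext s
    cases s <;> simp [catalanProfile, dyckProfile, catalanWords, hdyck, binomialProfile, height,
      descents, uuEvenMid]
  | succ m ih => rw [catalanProfile_succ, dyckProfile_succ, ih]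

/-- The number of Catalan words of length `n` with exactly `k` runs of weak ascents
equals the number of Dyck paths of semilength `n` with exactly `k-1` occurrences of
`UU` whose midpoint lies at even height. -/
theorem wAscRuns_eq_uuEvenMid (n k : ℕ) (hn : 1 ≤ n) (hk : 1 ≤ k) :
    Nat.card {w : List ℕ | w ∈ CatalanWord n ∧ wAscRuns w = k} =
      Nat.card {p : List Bool | p ∈ DyckPath n ∧ uuEvenMid p = k - 1} := by
  obtain ⟨m, rfl⟩ : ∃ m, n = m + 1 := ⟨n - 1, by omega⟩
  rw [natCard_catalanWord_wAscRuns m hk, natCard_dyckPath_uuEvenMid,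
    catalanProfile_eq_dyckProfile]
end
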